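/- arXiv:2109.09974 — 2 statements merged into one kernel-verified Lean document; each statement's English description precedes it below -/
import Mathlib

section
/- For rotation matrices R, R* ∈ SO(3), define the orientation error e_R = (1/2)(R*ᵀR − RᵀR*)ᵛ ∈ ℝ³ and Ψ(R,R*) = (1/2)tr(I − R*ᵀR). If Ψ(R,R*) < α for some α with 0 < α < 2, then (1/2)‖e_R‖² ≤ Ψ(R,R*) ≤ (1/(2−α))‖e_R‖². -/
/-!
Put `Q = R*ᵀ R ∈ SO(3)` and `t = tr Q`, so that `Ψ = (3 - t) / 2` and `e_R = (1/2) (Q - Qᵀ)ᵛ`.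
For a rotation the diagonal cofactors equal the diagonal entries and the columns are unit
vectors; together they give `‖(Q - Qᵀ)ᵛ‖² = (3 - t)(1 + t)`, i.e. `‖e_R‖² = Ψ (2 - Ψ)`.
Both bounds are then elementary: `Ψ ≥ 0` because `‖e_R‖² ≥ 0` and `Ψ < 2`, and
`Ψ (2 - α) ≤ Ψ (2 - Ψ)` because `Ψ < α`.
-/

open Matrix

noncomputable def vee (A : Matrix (Fin 3) (Fin 3) ℝ) : Fin 3 → ℝ :=
  ![A 2 1, A 0 2, A 1 0]

theorem Matrix.adjugate_eq_transpose_of_transpose_mul_self_eq_one {n R : Type*} [Fintype n]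
    [DecidableEq n] [CommRing R] {Q : Matrix n n R} (hQ : Qᵀ * Q = 1) (hdet : Q.det = 1) :
    adjugate Q = Qᵀ := by
  rw [← inv_eq_left_inv hQ, inv_def, hdet]
  simp

theorem Matrix.transpose_mul_transpose_mul_self_eq_one {n R : Type*} [Fintype n] [DecidableEq n]
    [CommRing R] {A B : Matrix n n R} (hA : Aᵀ * A = 1) (hB : Bᵀ * B = 1) :
    (Aᵀ * B)ᵀ * (Aᵀ * B) = 1 := by
  rw [transpose_mul, transpose_transpose, Matrix.mul_assoc, ← Matrix.mul_assoc A,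
    mul_eq_one_comm.mp hA, Matrix.one_mul, hB]

theorem sum_vee_sub_transpose_sq {Q : Matrix (Fin 3) (Fin 3) ℝ} (hQ : Qᵀ * Q = 1)
    (hdet : Q.det = 1) :
    ∑ i, vee (Q - Qᵀ) i ^ 2 = (3 - Q.trace) * (1 + Q.trace) := by
  have hunit (j : Fin 3) : Q 0 j * Q 0 j + Q 1 j * Q 1 j + Q 2 j * Q 2 j = 1 := by
    simpa [mul_apply, Fin.sum_univ_three] using congrFun (congrFun hQ j) j
  have hcofactor (i : Fin 3) : adjugate Q i i = Q i i := by
    rw [adjugate_eq_transpose_of_transpose_mul_self_eq_one hQ hdet, transpose_apply]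
  have h0 := hcofactor 0
  have h1 := hcofactor 1
  have h2 := hcofactor 2
  simp only [adjugate_fin_three, of_apply, cons_val', cons_val_zero, cons_val_fin_one,
    cons_val_one, cons_val] at h0 h1 h2
  simp only [vee, Matrix.sub_apply, transpose_apply, Fin.sum_univ_three, cons_val_zero,
    cons_val_one, cons_val, trace_fin_three]
  linear_combination hunit 0 + hunit 1 + hunit 2 + 2 * h0 + 2 * h1 + 2 * h2

noncomputable def Psi (R Rs : Matrix (Fin 3) (Fin 3) ℝ) : ℝ :=
  (1 / 2) * trace (1 - Rsᵀ * R)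

noncomputable def eR (R Rs : Matrix (Fin 3) (Fin 3) ℝ) : Fin 3 → ℝ :=
  ((1 : ℝ) / 2) • vee (Rsᵀ * R - Rᵀ * Rs)

theorem sum_eR_sq {R Rs : Matrix (Fin 3) (Fin 3) ℝ} (hR : Rᵀ * R = 1) (hdetR : R.det = 1)
    (hRs : Rsᵀ * Rs = 1) (hdetRs : Rs.det = 1) :
    ∑ i, eR R Rs i ^ 2 = Psi R Rs * (2 - Psi R Rs) := by
  have hQ := transpose_mul_transpose_mul_self_eq_one hRs hR
  have hdetQ : (Rsᵀ * R).det = 1 := by rw [det_mul, det_transpose, hdetRs, hdetR, one_mul]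
  have hsq := sum_vee_sub_transpose_sq hQ hdetQ
  rw [transpose_mul, transpose_transpose] at hsq
  simp only [eR, Psi, Pi.smul_apply, smul_eq_mul, mul_pow, ← Finset.mul_sum, hsq, trace_sub,
    trace_one, Fintype.card_fin]
  ring

theorem bounds_of_eq_mul_two_sub {ψ E α : ℝ} (hE : E = ψ * (2 - ψ)) (hE0 : 0 ≤ E)
    (hα : α < 2) (hψ : ψ < α) :
    1 / 2 * E ≤ ψ ∧ ψ ≤ 1 / (2 - α) * E := by
  have hψ0 : 0 ≤ ψ := by nlinarith
  refine ⟨by nlinarith, ?_⟩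
  rw [one_div_mul_eq_div, le_div_iff₀ (by linarith)]
  nlinarith

theorem Psi_eR_bounds_general (R Rs : Matrix (Fin 3) (Fin 3) ℝ)
    (hR : Rᵀ * R = 1) (hdetR : R.det = 1)
    (hRs : Rsᵀ * Rs = 1) (hdetRs : Rs.det = 1)
    (α : ℝ) (hα2 : α < 2)
    (hΨ : (1/2) * Matrix.trace (1 - Rsᵀ * R) < α) :
    (1/2) * (∑ i, (((1:ℝ)/2) • vee (Rsᵀ * R - Rᵀ * Rs)) i ^ 2)
      ≤ (1/2) * Matrix.trace (1 - Rsᵀ * R) ∧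
    (1/2) * Matrix.trace (1 - Rsᵀ * R)
      ≤ (1/(2 - α)) * (∑ i, (((1:ℝ)/2) • vee (Rsᵀ * R - Rᵀ * Rs)) i ^ 2) :=
  bounds_of_eq_mul_two_sub (ψ := Psi R Rs) (E := ∑ i, eR R Rs i ^ 2)
    (sum_eR_sq hR hdetR hRs hdetRs) (by positivity) hα2 hΨ

theorem Psi_eR_bounds (R Rs : Matrix (Fin 3) (Fin 3) ℝ)
    (hR : Rᵀ * R = 1) (hdetR : R.det = 1)
    (hRs : Rsᵀ * Rs = 1) (hdetRs : Rs.det = 1)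
    (α : ℝ) (hα0 : 0 < α) (hα2 : α < 2)
    (hΨ : (1/2) * Matrix.trace (1 - Rsᵀ * R) < α) :
    (1/2) * (∑ i, (((1:ℝ)/2) • vee (Rsᵀ * R - Rᵀ * Rs)) i ^ 2)
      ≤ (1/2) * Matrix.trace (1 - Rsᵀ * R) ∧
    (1/2) * Matrix.trace (1 - Rsᵀ * R)
      ≤ (1/(2 - α)) * (∑ i, (((1:ℝ)/2) • vee (Rsᵀ * R - Rᵀ * Rs)) i ^ 2) :=
  Psi_eR_bounds_general R Rs hR hdetR hRs hdetRs α hα2 hΨ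
end

section
/- For rotation matrices R, R* ∈ SO(3), the matrix E(R,R*) = (1/2)(tr(RᵀR*)·I − RᵀR*) has operator norm at most 1. -/
/-!
Put `Q = Rᵀ R*` and `t = tr Q`. As `Q ∈ SO(3)`, its adjugate is `Qᵀ`, so the 3×3 Cayley–Hamilton
identity reads `Qᵀ = Q² - tQ + tI`. Hence the symmetric matrix `M = Q + Qᵀ - (t - 1)I` satisfies
`QM = M` and `M² = (3 - t)M`; so `M ⪰ 0`, and a trace computation on the complement of `M` gives
`t ≥ -1`. The bound `‖E‖ ≤ 1` is then the decomposition
`I - EᵀE = ((t + 1) / 4) M + (1 / 4) (I - Q)ᵀ(I - Q)` into positive semidefinite parts.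
-/

open Matrix

theorem adjugate_fin_three_eq_mul_self_sub {α : Type*} [CommRing α] (A : Matrix (Fin 3) (Fin 3) α) :
    adjugate A = A * A - trace A • A + trace (adjugate A) • 1 := by
  rw [adjugate_fin_three]
  ext i j
  fin_cases i <;> fin_cases j <;>
    simp [mul_apply, Fin.sum_univ_three, trace_fin_three, one_apply] <;> ring

theorem adjugate_eq_transpose {n α : Type*} [Fintype n] [DecidableEq n] [CommRing α]
    {Q : Matrix n n α} (hQ : Qᵀ * Q = 1) (hdet : Q.det = 1) : adjugate Q = Qᵀ := by
  calc adjugate Q = Qᵀ * Q * adjugate Q := by rw [hQ, one_mul]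
    _ = Qᵀ := by rw [mul_assoc, mul_adjugate, hdet, one_smul, mul_one]

theorem transpose_mul_self_one_sub {n α : Type*} [Fintype n] [DecidableEq n] [CommRing α]
    {Q : Matrix n n α} (hQ : Qᵀ * Q = 1) : (1 - Q)ᵀ * (1 - Q) = (2 : α) • 1 - (Q + Qᵀ) := by
  simp only [transpose_sub, transpose_one, sub_mul, mul_sub, one_mul, mul_one, hQ]
  module

theorem transpose_mul_self_one_add {n α : Type*} [Fintype n] [DecidableEq n] [CommRing α]
    {Q : Matrix n n α} (hQ : Qᵀ * Q = 1) : (1 + Q)ᵀ * (1 + Q) = (2 : α) • 1 + (Q + Qᵀ) := by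
  simp only [transpose_add, transpose_one, add_mul, mul_add, one_mul, mul_one, hQ]
  module

theorem trace_le_card_of_transpose_mul_self {n : Type*} [Fintype n] [DecidableEq n]
    {Q : Matrix n n ℝ} (hQ : Qᵀ * Q = 1) : trace Q ≤ Fintype.card n := by
  have h := (posSemidef_conjTranspose_mul_self (1 - Q)).trace_nonneg
  rw [conjTranspose_eq_transpose_of_trivial, transpose_mul_self_one_sub hQ, trace_sub, trace_add,
    trace_transpose, trace_smul, trace_one, smul_eq_mul] at h
  linarith

open scoped ComplexOrder in
theorem posSemidef_of_mul_self_eq_smul {n 𝕜 : Type*} [Fintype n] [RCLike 𝕜]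
    {M : Matrix n n 𝕜} (hM : M.IsHermitian) {c : ℝ} (hc : 0 ≤ c) (hMM : M * M = c • M) :
    M.PosSemidef := by
  rcases hc.eq_or_lt with rfl | hc
  · have hM0 : Mᴴ * M = 0 := by rw [hM.eq, hMM, zero_smul]
    rw [trace_conjTranspose_mul_self_eq_zero_iff.mp (by rw [hM0, trace_zero] : (Mᴴ * M).trace = 0)]
    exact .zero
  · rw [show M = c⁻¹ • (Mᴴ * M) by rw [hM.eq, hMM, smul_smul, inv_mul_cancel₀ hc.ne', one_smul]]
    exact (posSemidef_conjTranspose_mul_self M).smul (inv_nonneg.mpr hc.le)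

theorem sqrt_sum_sq_mulVec_le {m n : Type*} [Fintype m] [Fintype n] [DecidableEq n]
    {A : Matrix m n ℝ}
    (hA : (1 - Aᵀ * A).PosSemidef) (x : n → ℝ) :
    √(∑ i, (A *ᵥ x) i ^ 2) ≤ √(∑ i, x i ^ 2) := by
  have h := hA.dotProduct_mulVec_nonneg x
  rw [star_trivial, sub_mulVec, one_mulVec, dotProduct_sub, ← mulVec_mulVec, dotProduct_mulVec,
    vecMul_transpose, sub_nonneg] at h
  simpa only [dotProduct, sq] using Real.sqrt_le_sqrt h

/-- For a rotation by the angle `θ` about the unit axis `n` this is `2 (1 - cos θ) n nᵀ`. -/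
def axisMatrix (Q : Matrix (Fin 3) (Fin 3) ℝ) : Matrix (Fin 3) (Fin 3) ℝ :=
  Q + Qᵀ - (trace Q - 1) • 1

theorem transpose_axisMatrix (Q : Matrix (Fin 3) (Fin 3) ℝ) : (axisMatrix Q)ᵀ = axisMatrix Q := by
  rw [axisMatrix, transpose_sub, transpose_add, transpose_transpose, transpose_smul, transpose_one,
    add_comm]

theorem isHermitian_axisMatrix (Q : Matrix (Fin 3) (Fin 3) ℝ) : (axisMatrix Q).IsHermitian := by
  rw [IsHermitian, conjTranspose_eq_transpose_of_trivial, transpose_axisMatrix]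

theorem trace_axisMatrix (Q : Matrix (Fin 3) (Fin 3) ℝ) : trace (axisMatrix Q) = 3 - trace Q := by
  simp only [axisMatrix, trace_sub, trace_add, trace_transpose, trace_smul, trace_one,
    Fintype.card_fin, smul_eq_mul]
  ring

theorem transpose_mul_self_one_add_eq_axisMatrix {Q : Matrix (Fin 3) (Fin 3) ℝ} (hQ : Qᵀ * Q = 1) :
    (1 + Q)ᵀ * (1 + Q) = (trace Q + 1) • 1 + axisMatrix Q := by
  rw [transpose_mul_self_one_add hQ, axisMatrix]
  module

section SpecialOrthogonal

variable {Q : Matrix (Fin 3) (Fin 3) ℝ} (hQ : Qᵀ * Q = 1) (hdet : Q.det = 1)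
include hQ hdet

theorem transpose_eq_of_det_eq_one : Qᵀ = Q * Q - trace Q • Q + trace Q • 1 := by
  have h := adjugate_fin_three_eq_mul_self_sub Q
  rwa [adjugate_eq_transpose hQ hdet, trace_transpose] at h

theorem mul_axisMatrix : Q * axisMatrix Q = axisMatrix Q := by
  rw [axisMatrix, mul_sub, mul_add, mul_eq_one_comm.mp hQ, mul_smul_comm, mul_one,
    transpose_eq_of_det_eq_one hQ hdet]
  module

theorem axisMatrix_mul_self : axisMatrix Q * axisMatrix Q = (3 - trace Q) • axisMatrix Q := by
  have hQM := mul_axisMatrix hQ hdet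
  have hQtM : Qᵀ * axisMatrix Q = axisMatrix Q := by
    rw [← hQM, ← mul_assoc, hQ, one_mul, hQM]
  rw [show axisMatrix Q * axisMatrix Q = (Q + Qᵀ - (trace Q - 1) • 1) * axisMatrix Q from rfl,
    sub_mul, add_mul, hQM, hQtM, smul_mul_assoc, one_mul]
  module

theorem posSemidef_axisMatrix : (axisMatrix Q).PosSemidef :=
  posSemidef_of_mul_self_eq_smul (isHermitian_axisMatrix Q)
    (by have h := trace_le_card_of_transpose_mul_self hQ; norm_num at h; linarith)
    (axisMatrix_mul_self hQ hdet)

theorem neg_one_le_trace : -1 ≤ trace Q := by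
  set t := trace Q
  set M := axisMatrix Q
  -- `K` is `3 - t` times the projection onto the plane orthogonal to the axis of `Q`.
  set K := (3 - t) • (1 : Matrix (Fin 3) (Fin 3) ℝ) - M
  have hMM := axisMatrix_mul_self hQ hdet
  have hKM : K * M = 0 := by rw [sub_mul, smul_mul_assoc, one_mul, hMM, sub_self]
  have hMK : M * K = 0 := by rw [mul_sub, mul_smul_comm, mul_one, hMM, sub_self]
  have hKK : K * K = (3 - t) • K := by
    rw [show K * K = K * ((3 - t) • 1 - M) from rfl, mul_sub, mul_smul_comm, mul_one, hKM, sub_zero]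
  have hK : Kᵀ = K := by
    rw [transpose_sub, transpose_smul, transpose_one, transpose_axisMatrix]
  have hgram : ((1 + Q) * K)ᴴ * ((1 + Q) * K) = ((t + 1) * (3 - t)) • K := by
    rw [conjTranspose_eq_transpose_of_trivial, transpose_mul, hK, mul_assoc, ← mul_assoc _ _ K,
      transpose_mul_self_one_add_eq_axisMatrix hQ, add_mul, smul_mul_assoc, one_mul, hMK, add_zero,
      mul_smul_comm, hKK, smul_smul]
  have htrK : trace K = 2 * (3 - t) := by
    rw [trace_sub, trace_smul, trace_one, trace_axisMatrix, Fintype.card_fin, smul_eq_mul]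
    ring
  have h := (posSemidef_conjTranspose_mul_self ((1 + Q) * K)).trace_nonneg
  rw [hgram, trace_smul, htrK, smul_eq_mul] at h
  by_contra! ht
  have : (t + 1) * (3 - t) * (2 * (3 - t)) < 0 :=
    mul_neg_of_neg_of_pos (mul_neg_of_neg_of_pos (by linarith) (by linarith)) (by linarith)
  linarith

theorem posSemidef_one_sub_transpose_mul_self_half_trace_smul_one_sub :
    (1 - ((1 / 2 : ℝ) • (trace Q • 1 - Q))ᵀ * ((1 / 2 : ℝ) • (trace Q • 1 - Q))).PosSemidef := by
  have hsplit : 1 - ((1 / 2 : ℝ) • (trace Q • 1 - Q))ᵀ * ((1 / 2 : ℝ) • (trace Q • 1 - Q)) =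
      ((trace Q + 1) / 4) • axisMatrix Q + (1 / 4 : ℝ) • ((1 - Q)ᵀ * (1 - Q)) := by
    rw [transpose_mul_self_one_sub hQ, axisMatrix]
    simp only [transpose_smul, transpose_sub, transpose_one, sub_mul, mul_sub,
      smul_mul_assoc, mul_smul_comm, one_mul, mul_one, hQ]
    module
  have hgram := posSemidef_conjTranspose_mul_self (1 - Q)
  rw [conjTranspose_eq_transpose_of_trivial] at hgram
  rw [hsplit]
  exact ((posSemidef_axisMatrix hQ hdet).smul (by linarith [neg_one_le_trace hQ hdet])).add
    (hgram.smul (by norm_num))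

end SpecialOrthogonal

theorem E_opNorm_le_one (R Rs : Matrix (Fin 3) (Fin 3) ℝ)
    (hR : Rᵀ * R = 1) (hdetR : R.det = 1)
    (hRs : Rsᵀ * Rs = 1) (hdetRs : Rs.det = 1) :
    ∀ x : Fin 3 → ℝ,
      Real.sqrt (∑ i, ((((1:ℝ)/2) • (Matrix.trace (Rᵀ * Rs) • (1 : Matrix (Fin 3) (Fin 3) ℝ) - Rᵀ * Rs)) *ᵥ x) i ^ 2)
        ≤ Real.sqrt (∑ i, x i ^ 2) := by
  have hQ : (Rᵀ * Rs)ᵀ * (Rᵀ * Rs) = 1 := by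
    rw [transpose_mul, transpose_transpose, mul_assoc, ← mul_assoc R, mul_eq_one_comm.mp hR,
      one_mul, hRs]
  have hdet : (Rᵀ * Rs).det = 1 := by rw [det_mul, det_transpose, hdetR, hdetRs, one_mul]
  exact sqrt_sum_sq_mulVec_le (posSemidef_one_sub_transpose_mul_self_half_trace_smul_one_sub hQ hdet)
end
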